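/- Finite-amplitude pendulum action in elliptic form (Equation (pendulum_action), second part): let m > 0, ℓ > 0, g > 0, and 0 < k < 1, set θ_max = 2·arcsin k and E_tot = 2·m·g·ℓ·k². Then the action integral satisfies (1/π)·∫_{−θ_max}^{θ_max} √( 2·m·ℓ²·( E_tot − m·g·ℓ·(1 − cos θ) ) ) dθ = (8·m·ℓ²·√(g/ℓ)/π)·( E(k) − (1 − k²)·K(k) ). -/

import Mathlib

open intervalIntegral Real

/-!
Writing `1 - cos θ = 2 sin² (θ/2)`, the action integrand is `2mℓ²√(g/ℓ)·√(k² - sin² (θ/2))`,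
an even function of `θ`. On `[0, θ_max]` substitute `θ = 2 arcsin (k sin φ)`, `φ ∈ [0, π/2]`:
then `√(k² - sin² (θ/2)) = k cos φ` and `dθ = 2k cos φ / √(1 - k² sin² φ) dφ`, so the action is
`(8mℓ²√(g/ℓ)/π) ∫₀^{π/2} k² cos² φ / √(1 - k² sin² φ) dφ`. Since `k² cos² φ = Δ² - (1 - k²)` for
`Δ = √(1 - k² sin² φ)`, the last integral is `E(k) - (1 - k²) K(k)`.
-/

noncomputable def completeEllipticK (k : ℝ) : ℝ :=
  ∫ φ in (0 : ℝ)..(π / 2), 1 / √(1 - k ^ 2 * sin φ ^ 2)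

noncomputable def completeEllipticE (k : ℝ) : ℝ :=
  ∫ φ in (0 : ℝ)..(π / 2), √(1 - k ^ 2 * sin φ ^ 2)

lemma one_sub_sq_mul_sin_sq_pos {k : ℝ} (hk : k ^ 2 < 1) (φ : ℝ) :
    0 < 1 - k ^ 2 * sin φ ^ 2 := by
  nlinarith [sin_sq_le_one φ, sq_nonneg k]

lemma completeEllipticE_sub_mul_completeEllipticK {k : ℝ} (hk : k ^ 2 < 1) :
    completeEllipticE k - (1 - k ^ 2) * completeEllipticK k
      = ∫ φ in (0 : ℝ)..(π / 2), k ^ 2 * cos φ ^ 2 / √(1 - k ^ 2 * sin φ ^ 2) := by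
  have hΔ : Continuous fun φ : ℝ => √(1 - k ^ 2 * sin φ ^ 2) := by fun_prop
  have hΔ_ne (φ : ℝ) : √(1 - k ^ 2 * sin φ ^ 2) ≠ 0 :=
    (sqrt_pos.2 (one_sub_sq_mul_sin_sq_pos hk φ)).ne'
  have hK_cont : Continuous fun φ : ℝ => (1 - k ^ 2) * (1 / √(1 - k ^ 2 * sin φ ^ 2)) :=
    continuous_const.mul (continuous_const.div hΔ hΔ_ne)
  rw [completeEllipticE, completeEllipticK, ← integral_const_mul,
    ← integral_sub (hΔ.intervalIntegrable _ _) (hK_cont.intervalIntegrable _ _)]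
  refine integral_congr fun φ _ => ?_
  have hsq : √(1 - k ^ 2 * sin φ ^ 2) ^ 2 = 1 - k ^ 2 * sin φ ^ 2 :=
    sq_sqrt (one_sub_sq_mul_sin_sq_pos hk φ).le
  field_simp [hΔ_ne φ]
  rw [hsq, cos_sq']
  ring

lemma integral_neg_eq_two_mul_integral_of_even {f : ℝ → ℝ} {a : ℝ} (heven : ∀ x, f (-x) = f x)
    (hf : IntervalIntegrable f MeasureTheory.volume (-a) a) :
    ∫ x in -a..a, f x = 2 * ∫ x in (0 : ℝ)..a, f x := by
  have hzero : (0 : ℝ) ∈ Set.uIcc (-a) a := by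
    rcases le_total 0 a with h | h <;> simp [h]
  rw [← integral_add_adjacent_intervals (hf.mono_set (Set.uIcc_subset_uIcc_left hzero))
    (hf.mono_set (Set.uIcc_subset_uIcc_right hzero))]
  have hneg : ∫ x in -a..0, f x = ∫ x in (0 : ℝ)..a, f x := by
    simpa only [heven, neg_zero] using (integral_comp_neg (a := 0) (b := a) f).symm
  rw [hneg, two_mul]

lemma pendulum_momentum_half_angle {m ℓ g : ℝ} (hm : 0 ≤ m) (hℓ : 0 < ℓ) (hg : 0 ≤ g) (k θ : ℝ) :
    √(2 * m * ℓ ^ 2 * (2 * m * g * ℓ * k ^ 2 - m * g * ℓ * (1 - cos θ)))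
      = 2 * m * ℓ ^ 2 * √(g / ℓ) * √(k ^ 2 - sin (θ / 2) ^ 2) := by
  have hcos : 1 - cos θ = 2 * sin (θ / 2) ^ 2 := by
    rw [sin_sq_eq_half_sub, mul_div_cancel₀ θ two_ne_zero]
    ring
  have hfactor : 2 * m * ℓ ^ 2 * (2 * m * g * ℓ * k ^ 2 - m * g * ℓ * (1 - cos θ))
      = (2 * m * ℓ ^ 2) ^ 2 * (g / ℓ) * (k ^ 2 - sin (θ / 2) ^ 2) := by
    rw [hcos]
    field_simp
  rw [hfactor, sqrt_mul (by positivity), sqrt_mul (sq_nonneg _), sqrt_sq (by positivity)]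

lemma hasDerivAt_two_mul_arcsin_mul_sin {k : ℝ} (hk : k ^ 2 < 1) (φ : ℝ) :
    HasDerivAt (fun φ => 2 * arcsin (k * sin φ))
      (2 * k * cos φ / √(1 - k ^ 2 * sin φ ^ 2)) φ := by
  have hlt : (k * sin φ) ^ 2 < 1 := by
    nlinarith [one_sub_sq_mul_sin_sq_pos hk φ]
  have hne₁ : k * sin φ ≠ -1 := by
    rintro h; rw [h] at hlt; norm_num at hlt
  have hne₂ : k * sin φ ≠ 1 := by
    rintro h; rw [h] at hlt; norm_num at hlt
  refine (((hasDerivAt_arcsin hne₁ hne₂).comp φ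
    ((hasDerivAt_sin φ).const_mul k)).const_mul 2).congr_deriv ?_
  rw [mul_pow]
  ring

lemma integral_sqrt_sq_sub_sin_half_sq {k : ℝ} (hk0 : 0 ≤ k) (hk1 : k < 1) :
    ∫ θ in (0 : ℝ)..(2 * arcsin k), √(k ^ 2 - sin (θ / 2) ^ 2)
      = 2 * ∫ φ in (0 : ℝ)..(π / 2), k ^ 2 * cos φ ^ 2 / √(1 - k ^ 2 * sin φ ^ 2) := by
  have hk : k ^ 2 < 1 := by nlinarith
  have hΔ_ne (φ : ℝ) : √(1 - k ^ 2 * sin φ ^ 2) ≠ 0 :=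
    (sqrt_pos.2 (one_sub_sq_mul_sin_sq_pos hk φ)).ne'
  have hsubst := integral_comp_mul_deriv (a := 0) (b := π / 2)
    (g := fun θ => √(k ^ 2 - sin (θ / 2) ^ 2))
    (fun φ _ => hasDerivAt_two_mul_arcsin_mul_sin hk φ)
    ((continuous_const.mul continuous_cos).div (by fun_prop) hΔ_ne).continuousOn (by fun_prop)
  simp only [sin_zero, mul_zero, arcsin_zero, sin_pi_div_two, mul_one] at hsubst
  rw [← hsubst, ← integral_const_mul]
  refine integral_congr fun φ hφ => ?_
  rw [Set.uIcc_of_le (by positivity)] at hφ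
  have hcos : 0 ≤ cos φ := cos_nonneg_of_mem_Icc ⟨by linarith [hφ.1, pi_pos], hφ.2⟩
  have hsin : sin (arcsin (k * sin φ)) = k * sin φ := by
    have := neg_one_le_sin φ
    have := sin_le_one φ
    exact sin_arcsin (by nlinarith) (by nlinarith)
  have hroot : √(k ^ 2 - sin (2 * arcsin (k * sin φ) / 2) ^ 2) = k * cos φ := by
    rw [mul_div_cancel_left₀ _ two_ne_zero, hsin, ← sqrt_sq (by positivity : 0 ≤ k * cos φ)]
    congr 1
    nlinarith [sin_sq_add_cos_sq φ]
  simp only [Function.comp, hroot]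
  ring

/-- Finite-amplitude pendulum action in elliptic form: with amplitude
`θ_max = 2·arcsin k`, modulus `0 < k < 1`, and energy `E_tot = 2mgℓk²`, the
libration action `(1/π)·∫_{−θ_max}^{θ_max} √(2mℓ²(E_tot − mgℓ(1 − cos θ))) dθ`
equals `(8mℓ²√(g/ℓ)/π)·(E(k) − (1 − k²)·K(k))`, where `K` and `E` are the
complete elliptic integrals of the first and second kind. -/
theorem pendulum_action_elliptic
    (m ℓ g k : ℝ) (hm : 0 < m) (hℓ : 0 < ℓ) (hg : 0 < g)
    (hk0 : 0 < k) (hk1 : k < 1)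
    (θmax : ℝ) (hθ : θmax = 2 * Real.arcsin k)
    (Etot : ℝ) (hE : Etot = 2 * m * g * ℓ * k^2)
    (K : ℝ) (hK : K = ∫ φ in (0:ℝ)..(Real.pi/2),
      1 / Real.sqrt (1 - k^2 * (Real.sin φ)^2))
    (Eell : ℝ) (hEell : Eell = ∫ φ in (0:ℝ)..(Real.pi/2),
      Real.sqrt (1 - k^2 * (Real.sin φ)^2)) :
    (1/Real.pi) * (∫ θ in (-θmax)..θmax,
        Real.sqrt (2 * m * ℓ^2 * (Etot - m * g * ℓ * (1 - Real.cos θ))))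
      = (8 * m * ℓ^2 * Real.sqrt (g/ℓ) / Real.pi) * (Eell - (1 - k^2) * K) := by
  subst hθ hE
  obtain rfl : K = completeEllipticK k := hK
  obtain rfl : Eell = completeEllipticE k := hEell
  have heven (θ : ℝ) : √(k ^ 2 - sin (-θ / 2) ^ 2) = √(k ^ 2 - sin (θ / 2) ^ 2) := by
    rw [neg_div, sin_neg, neg_sq]
  rw [integral_congr fun θ _ => pendulum_momentum_half_angle hm.le hℓ hg.le k θ, integral_const_mul,
    integral_neg_eq_two_mul_integral_of_even heven ((by fun_prop : Continuous _).intervalIntegrable _ _),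
    integral_sqrt_sq_sub_sin_half_sq hk0.le hk1,
    completeEllipticE_sub_mul_completeEllipticK (by nlinarith)]
  field_simp
  ring
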